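/- Fix k ≥ 2 and choices of reduced expressions for all permutations of {1,…,k}. Let w₁, w₂, w ∈ S_k and let ς₁, ς₂ ∈ {+1, −1}. Let v := 𝕋_{w₂}(e_id) if ς₂ = +1 and v := 𝕋⁻_{w₂}(e_id) if ς₂ = −1, and let A := 𝕋_{w₁} if ς₁ = +1 and A := 𝕋⁻_{w₁} if ς₁ = −1. Then κ(w₁^{ς₁}w₂^{ς₂}) + ord_w(A(v)) ≥ κ(w). Moreover, if equality holds (with ord_w(A(v)) finite), then w₁^{ς₁}w₂^{ς₂} is a κ-factor of w, i.e. there exist σ, τ ∈ S_k with w = σ·(w₁^{ς₁}w₂^{ς₂})·τ and κ(w) = κ(σ) + κ(w₁^{ς₁}w₂^{ς₂}) + κ(τ). -/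

import Mathlib

/-!
STATEMENT 13.  `S_k` is realized as `Equiv.Perm (Fin k)` (0-based points), `R = ℚ[h]` as
`Polynomial ℚ` (with `h = Polynomial.X`), and the free `R`-module `M` with basis
`{e_w : w ∈ S_k}` as `Equiv.Perm (Fin k) →₀ Polynomial ℚ` (so `e_w = Finsupp.single w 1`).
-/

noncomputable section

abbrev Rh : Type := Polynomial ℚ

abbrev Mmod (k : ℕ) : Type := Equiv.Perm (Fin k) →₀ Rh

/-- The number of inversions of a permutation of `Fin k`. -/
def invCount {k : ℕ} (w : Equiv.Perm (Fin k)) : ℕ :=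
  (Finset.univ.filter (fun p : Fin k × Fin k => p.1 < p.2 ∧ w p.2 < w p.1)).card

/-- The adjacent transposition `s_i = (i, i+1)` of `Fin k`, as a total function of `i : ℕ`
(junk value `1` out of range). -/
def sN (k i : ℕ) : Equiv.Perm (Fin k) :=
  if h : i + 1 < k then Equiv.swap ⟨i, by omega⟩ ⟨i + 1, h⟩ else 1

/-- The operator `L_i` on `M`: `L_i e_w = e_{s_iw}` if `inv(s_iw) > inv(w)` and
`L_i e_w = e_{s_iw} + h·e_w` otherwise. -/
def Lop (k i : ℕ) : Module.End Rh (Mmod k) :=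
  Finsupp.lsum Rh fun w : Equiv.Perm (Fin k) =>
    if invCount w < invCount (sN k i * w) then Finsupp.lsingle (sN k i * w)
    else Finsupp.lsingle (sN k i * w) +
      (Polynomial.X : Rh) • (Finsupp.lsingle w : Rh →ₗ[Rh] Mmod k)

/-- The operator `L_i' = L_i − h·id`. -/
def Lop' (k i : ℕ) : Module.End Rh (Mmod k) :=
  Lop k i - (Polynomial.X : Rh) • (1 : Module.End Rh (Mmod k))

/-- `𝕋_w = L_{i₁} ∘ ⋯ ∘ L_{i_ℓ}` along a list of indices `[i₁, …, i_ℓ]`. -/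
def Tpos (k : ℕ) (l : List ℕ) : Module.End Rh (Mmod k) := (l.map (Lop k)).prod

/-- `𝕋⁻_w = L'_{i_ℓ} ∘ ⋯ ∘ L'_{i₁}` along a list of indices `[i₁, …, i_ℓ]`. -/
def Tneg (k : ℕ) (l : List ℕ) : Module.End Rh (Mmod k) := (l.reverse.map (Lop' k)).prod

/-- `κ(w)`: the least number of (not necessarily adjacent) transpositions whose product
is `w`. -/
def kappa {k : ℕ} (w : Equiv.Perm (Fin k)) : ℕ :=
  sInf {n : ℕ | ∃ l : List (Equiv.Perm (Fin k)), l.length = n ∧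
    (∀ τ ∈ l, ∃ a b : Fin k, a ≠ b ∧ τ = Equiv.swap a b) ∧ l.prod = w}

/-- `ord_x(v)`: the multiplicity of the root `h = 0` of the `e_x`-coefficient of `v`
(`∞` if that coefficient is `0`). -/
def ordAt {k : ℕ} (v : Mmod k) (x : Equiv.Perm (Fin k)) : ℕ∞ :=
  if v x = 0 then ⊤ else (Polynomial.rootMultiplicity 0 (v x) : ℕ∞)

/-!
Say that `v ∈ M` is `κ`-divisible at `g ∈ S_k` if for every `x` the `e_x`-coefficient of `v` is
divisible by `h ^ κ(g⁻¹x)`. This holds for `e_id` at `g = 1`, and both `L_i` and `L_i'` carry it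
from `(v, g)` to `(L_i v, s_i g)`: the `e_x`-coefficient of `L_i v` is the `e_{s_ix}`-coefficient
of `v`, plus possibly `h` times its `e_x`-coefficient, while `κ(g⁻¹s_ix) ≤ κ(g⁻¹x) + 1` because `κ`
is subadditive and conjugation invariant. Iterating along the chosen words, `A v` is `κ`-divisible
at `w₁^{ς₁}w₂^{ς₂}`, so `ord_w(A v) ≥ κ((w₁^{ς₁}w₂^{ς₂})⁻¹w)`, and subadditivity of `κ` gives both
claims, with `σ = 1` and `τ = (w₁^{ς₁}w₂^{ς₂})⁻¹w` in the case of equality.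
-/

section

open Equiv Equiv.Perm Polynomial

variable {k : ℕ}

lemma kappa_le_length {w : Perm (Fin k)} {l : List (Perm (Fin k))}
    (hl : ∀ τ ∈ l, τ.IsSwap) (hw : l.prod = w) : kappa w ≤ l.length :=
  Nat.sInf_le ⟨l, rfl, hl, hw⟩

lemma exists_isSwap_list_length_kappa (w : Perm (Fin k)) :
    ∃ l : List (Perm (Fin k)), l.length = kappa w ∧ (∀ τ ∈ l, τ.IsSwap) ∧ l.prod = w := by
  obtain ⟨l, hl, hs⟩ := w.swapFactors
  exact Nat.sInf_mem (s := {n | ∃ l : List (Perm (Fin k)), l.length = n ∧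
    (∀ τ ∈ l, τ.IsSwap) ∧ l.prod = w}) ⟨l.length, l, rfl, hs, hl⟩

lemma kappa_one : kappa (1 : Perm (Fin k)) = 0 :=
  Nat.le_zero.mp (kappa_le_length (l := []) (by simp) rfl)

lemma kappa_mul_le (a b : Perm (Fin k)) : kappa (a * b) ≤ kappa a + kappa b := by
  obtain ⟨la, hla, hsa, rfl⟩ := exists_isSwap_list_length_kappa a
  obtain ⟨lb, hlb, hsb, rfl⟩ := exists_isSwap_list_length_kappa b
  rw [← hla, ← hlb, ← List.length_append, ← List.prod_append]
  exact kappa_le_length (fun τ hτ => (List.mem_append.mp hτ).elim (hsa τ) (hsb τ)) rfl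

lemma kappa_conj_le (a b : Perm (Fin k)) : kappa (a * b * a⁻¹) ≤ kappa b := by
  obtain ⟨l, hl, hs, rfl⟩ := exists_isSwap_list_length_kappa b
  rw [← hl, ← List.length_map (MulAut.conj a)]
  refine kappa_le_length ?_ (by rw [← map_list_prod, MulAut.conj_apply])
  simp only [List.mem_map]
  rintro _ ⟨_, hτ, rfl⟩
  obtain ⟨x, y, hxy, rfl⟩ := hs _ hτ
  exact ⟨a x, a y, a.injective.ne hxy, (swap_apply_apply a x y).symm⟩

lemma kappa_conj (a b : Perm (Fin k)) : kappa (a * b * a⁻¹) = kappa b :=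
  le_antisymm (kappa_conj_le a b) (by simpa [mul_assoc] using kappa_conj_le a⁻¹ (a * b * a⁻¹))

lemma kappa_mul_mul_le (a s b : Perm (Fin k)) : kappa (a * s * b) ≤ kappa s + kappa (a * b) :=
  calc kappa (a * s * b) = kappa (a * s * a⁻¹ * (a * b)) := by group
    _ ≤ kappa (a * s * a⁻¹) + kappa (a * b) := kappa_mul_le _ _
    _ = kappa s + kappa (a * b) := by rw [kappa_conj]

lemma sN_mul_self (i : ℕ) : sN k i * sN k i = 1 := by
  unfold sN
  split_ifs
  · exact swap_mul_self _ _
  · exact one_mul 1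

lemma sN_inv (i : ℕ) : (sN k i)⁻¹ = sN k i :=
  inv_eq_of_mul_eq_one_right (sN_mul_self i)

lemma kappa_sN_le (i : ℕ) : kappa (sN k i) ≤ 1 := by
  unfold sN
  split_ifs
  · exact kappa_le_length (by simpa using ⟨_, _, by simp [Fin.ext_iff], rfl⟩) List.prod_singleton
  · simp [kappa_one]

lemma Lop_apply (i : ℕ) (v : Mmod k) (x : Perm (Fin k)) :
    Lop k i v x = v (sN k i * x) +
      if invCount x < invCount (sN k i * x) then 0 else X * v x := by
  induction v using Finsupp.induction_linear with
  | zero => simp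
  | add f g hf hg =>
    simp only [map_add, Finsupp.add_apply, hf, hg]
    split_ifs <;> ring
  | single w c =>
    have hs : sN k i * w = x ↔ w = sN k i * x := by
      constructor <;> rintro rfl <;> simp [← mul_assoc, sN_mul_self]
    rw [Lop, Finsupp.lsum_single]
    by_cases hwx : w = x
    · subst hwx
      split_ifs <;> simp [Finsupp.single_apply, hs]
    · split_ifs <;> simp [Finsupp.single_apply, hs, hwx]

lemma Lop'_apply (i : ℕ) (v : Mmod k) (x : Perm (Fin k)) :
    Lop' k i v x = Lop k i v x - X * v x := by
  simp [Lop']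

def KappaDivisible (v : Mmod k) (g : Perm (Fin k)) : Prop :=
  ∀ x, X ^ kappa (g⁻¹ * x) ∣ v x

lemma kappaDivisible_single_one : KappaDivisible (Finsupp.single 1 1 : Mmod k) 1 := by
  intro x
  by_cases hx : x = 1
  · simp [hx, kappa_one]
  · simp [Ne.symm hx]

namespace KappaDivisible

variable {v : Mmod k} {g : Perm (Fin k)}

lemma pow_dvd_X_mul_apply (hv : KappaDivisible v g) (i : ℕ) (x : Perm (Fin k)) :
    X ^ kappa ((sN k i * g)⁻¹ * x) ∣ X * v x := by
  have hle : kappa ((sN k i * g)⁻¹ * x) ≤ kappa (g⁻¹ * x) + 1 := by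
    rw [mul_inv_rev, sN_inv]
    have := kappa_sN_le (k := k) i
    have := kappa_mul_mul_le g⁻¹ (sN k i) x
    omega
  exact (pow_dvd_pow X hle).trans (by rw [pow_succ']; exact mul_dvd_mul_left X (hv x))

lemma lop (hv : KappaDivisible v g) (i : ℕ) : KappaDivisible (Lop k i v) (sN k i * g) := by
  intro x
  rw [Lop_apply]
  refine dvd_add ?_ ?_
  · rw [mul_inv_rev, sN_inv, mul_assoc]
    exact hv _
  · split_ifs
    exacts [dvd_zero _, hv.pow_dvd_X_mul_apply i x]

lemma lop' (hv : KappaDivisible v g) (i : ℕ) : KappaDivisible (Lop' k i v) (sN k i * g) :=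
  fun x => Lop'_apply i v x ▸ dvd_sub (hv.lop i x) (hv.pow_dvd_X_mul_apply i x)

lemma tpos (hv : KappaDivisible v g) (l : List ℕ) :
    KappaDivisible (Tpos k l v) ((l.map (sN k)).prod * g) := by
  induction l with
  | nil => simpa [Tpos] using hv
  | cons i l ih => simpa [Tpos, mul_assoc] using ih.lop i

lemma tneg (hv : KappaDivisible v g) (l : List ℕ) :
    KappaDivisible (Tneg k l v) ((l.map (sN k)).prod⁻¹ * g) := by
  induction l generalizing v g with
  | nil => simpa [Tneg] using hv
  | cons i l ih => simpa [Tneg, mul_assoc, sN_inv] using ih (hv.lop' i)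

lemma signed (hv : KappaDivisible v g) (ς : Bool) {u : Perm (Fin k)} {l : List ℕ}
    (hl : (l.map (sN k)).prod = u) :
    KappaDivisible ((if ς then Tpos k l else Tneg k l) v) ((if ς then u else u⁻¹) * g) := by
  subst hl
  cases ς
  exacts [hv.tneg l, hv.tpos l]

lemma kappa_le_ordAt (hv : KappaDivisible v g) (x : Perm (Fin k)) :
    (kappa (g⁻¹ * x) : ℕ∞) ≤ ordAt v x := by
  unfold ordAt
  split_ifs with h
  · exact le_top
  · exact_mod_cast (le_rootMultiplicity_iff h).2 (by simpa using hv x)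

end KappaDivisible

end

theorem statement13_general (k : ℕ)
    (rw : Equiv.Perm (Fin k) → List ℕ)
    (hrw_eq : ∀ w, ((rw w).map (sN k)).prod = w)
    (w₁ w₂ w : Equiv.Perm (Fin k)) (ς₁ ς₂ : Bool)
    (wp : Equiv.Perm (Fin k))
    (hwp : wp = (if ς₁ then w₁ else w₁⁻¹) * (if ς₂ then w₂ else w₂⁻¹))
    (v : Mmod k)
    (hv : v = (if ς₂ then Tpos k (rw w₂) else Tneg k (rw w₂)) (Finsupp.single 1 1))
    (A : Module.End Rh (Mmod k))
    (hA : A = if ς₁ then Tpos k (rw w₁) else Tneg k (rw w₁)) :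
    (kappa w : ℕ∞) ≤ (kappa wp : ℕ∞) + ordAt (A v) w ∧
      ((kappa wp : ℕ∞) + ordAt (A v) w = (kappa w : ℕ∞) →
        ∃ σ τ : Equiv.Perm (Fin k), w = σ * wp * τ ∧
          kappa w = kappa σ + kappa wp + kappa τ) := by
  have hAv : KappaDivisible (A v) wp := by
    have := (kappaDivisible_single_one.signed ς₂ (hrw_eq w₂)).signed ς₁ (hrw_eq w₁)
    rwa [mul_one, ← hv, ← hA, ← hwp] at this
  have hord := hAv.kappa_le_ordAt w
  have htri : kappa w ≤ kappa wp + kappa (wp⁻¹ * w) := by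
    simpa using kappa_mul_le wp (wp⁻¹ * w)
  have hle : (kappa wp + kappa (wp⁻¹ * w) : ℕ∞) ≤ kappa wp + ordAt (A v) w :=
    add_le_add_right hord _
  refine ⟨le_trans (by exact_mod_cast htri) hle, fun heq => ⟨1, wp⁻¹ * w, by group, ?_⟩⟩
  rw [kappa_one, zero_add]
  exact le_antisymm htri (by exact_mod_cast heq ▸ hle)

/-- Fix `k ≥ 2` and a choice `rw` of reduced expressions for all `w ∈ S_k`.  Let
`w₁, w₂, w ∈ S_k` and signs `ς₁, ς₂ ∈ {+1, −1}` (encoded by `Bool`: `true ↦ +1`).  Put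
`v := 𝕋^{ς₂}_{w₂}(e_id)` and `A := 𝕋^{ς₁}_{w₁}`.  Then
`κ(w₁^{ς₁}w₂^{ς₂}) + ord_w(A v) ≥ κ(w)`, and if equality holds then `w₁^{ς₁}w₂^{ς₂}` is a
`κ`-factor of `w`: there are `σ, τ` with `w = σ·(w₁^{ς₁}w₂^{ς₂})·τ` and
`κ(w) = κ(σ) + κ(w₁^{ς₁}w₂^{ς₂}) + κ(τ)`. -/
theorem statement13 (k : ℕ) (hk : 2 ≤ k)
    (rw : Equiv.Perm (Fin k) → List ℕ)
    (hrw_idx : ∀ w, ∀ j ∈ rw w, j + 1 < k)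
    (hrw_eq : ∀ w, ((rw w).map (sN k)).prod = w)
    (hrw_min : ∀ w, ∀ l : List ℕ, (∀ j ∈ l, j + 1 < k) →
      (l.map (sN k)).prod = w → (rw w).length ≤ l.length)
    (w₁ w₂ w : Equiv.Perm (Fin k)) (ς₁ ς₂ : Bool)
    (wp : Equiv.Perm (Fin k))
    (hwp : wp = (if ς₁ then w₁ else w₁⁻¹) * (if ς₂ then w₂ else w₂⁻¹))
    (v : Mmod k)
    (hv : v = (if ς₂ then Tpos k (rw w₂) else Tneg k (rw w₂)) (Finsupp.single 1 1))
    (A : Module.End Rh (Mmod k))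
    (hA : A = if ς₁ then Tpos k (rw w₁) else Tneg k (rw w₁)) :
    (kappa w : ℕ∞) ≤ (kappa wp : ℕ∞) + ordAt (A v) w ∧
      ((kappa wp : ℕ∞) + ordAt (A v) w = (kappa w : ℕ∞) →
        ∃ σ τ : Equiv.Perm (Fin k), w = σ * wp * τ ∧
          kappa w = kappa σ + kappa wp + kappa τ) :=
  statement13_general k rw hrw_eq w₁ w₂ w ς₁ ς₂ wp hwp v hv A hA

end
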